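/- arXiv:2204.08031 — 2 statements merged into one kernel-verified Lean document; each statement's English description precedes it below -/
import Mathlib

section
/- Let Y₃ be a random variable and let Y₁,Ỹ₁ be conditionally i.i.d. given X₁, Y₂,Ỹ₂ conditionally i.i.d. given X₂, with Y₃, (Y₁,Ỹ₁), (Y₂,Ỹ₂) conditionally independent given (X₁,X₂,X₃). Then E[Cov[𝟙(Y₃ ≤ min(Y₁,Ỹ₁)), 𝟙(Y₃ ≤ min(Y₂,Ỹ₂)) | X₁,X₂,X₃]] = E[Var[h(Y₃) | X₃]], where h(t) = E[P(Y ≥ t | X)²] and G_X(t)=P(Y≥t|X). -/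
/-!
Fix `x₃` and write `f x t = G x t ^ 2`, so that `h = ∫ x, f x · ∂ρ`. Since `f` is bounded,
Fubini lets the `x₁`- and `x₂`-integrals be taken inside the `t`-integral against `κ x₃`;
averaging `f x₁` over `x₁` and then `f x₂` over `x₂` turns the covariance of `f x₁` and `f x₂`
under `κ x₃` into the variance of `h` under `κ x₃`.
-/

open MeasureTheory ProbabilityTheory Function

section Fubini

variable {E α : Type*} [MeasurableSpace E] [MeasurableSpace α]
  {ρ : Measure E} {μ : Measure α} [IsFiniteMeasure ρ] [IsFiniteMeasure μ]
  {f : E → α → ℝ} {C : ℝ}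

lemma integrable_uncurry_of_norm_le (hf : Measurable (uncurry f))
    (hfC : ∀ x t, ‖f x t‖ ≤ C) : Integrable (uncurry f) (ρ.prod μ) :=
  .of_bound hf.aestronglyMeasurable C (ae_of_all _ fun p => hfC p.1 p.2)

lemma integrable_uncurry_mul_of_norm_le (hf : Measurable (uncurry f))
    (hfC : ∀ x t, ‖f x t‖ ≤ C) {g : α → ℝ} {D : ℝ} (hg : Measurable g) (hgD : ∀ t, ‖g t‖ ≤ D) :
    Integrable (uncurry fun x t => f x t * g t) (ρ.prod μ) := by
  refine integrable_uncurry_of_norm_le (C := C * D) (hf.mul (hg.comp measurable_snd))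
    fun x t => ?_
  rw [norm_mul]
  exact mul_le_mul (hfC x t) (hgD t) (norm_nonneg _) ((norm_nonneg _).trans (hfC x t))

lemma integral_integral_mul_swap
    (hf : Measurable (uncurry f)) (hfC : ∀ x t, ‖f x t‖ ≤ C)
    {g : α → ℝ} {D : ℝ} (hg : Measurable g) (hgD : ∀ t, ‖g t‖ ≤ D) :
    ∫ x, ∫ t, f x t * g t ∂μ ∂ρ = ∫ t, (∫ x, f x t ∂ρ) * g t ∂μ := by
  rw [integral_integral_swap (integrable_uncurry_mul_of_norm_le hf hfC hg hgD)]
  simp only [integral_mul_const]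

theorem integral_integral_covariance_eq_variance_integral
    (hf : Measurable (uncurry f)) (hfC : ∀ x t, ‖f x t‖ ≤ C) :
    ∫ x₂, ∫ x₁, ((∫ t, f x₁ t * f x₂ t ∂μ) - (∫ t, f x₁ t ∂μ) * ∫ t, f x₂ t ∂μ) ∂ρ ∂ρ
      = (∫ t, (∫ x, f x t ∂ρ) ^ 2 ∂μ) - (∫ t, ∫ x, f x t ∂ρ ∂μ) ^ 2 := by
  set F : α → ℝ := fun t => ∫ x, f x t ∂ρ
  have hF : Measurable F := hf.stronglyMeasurable.integral_prod_left.measurable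
  have hFC (t : α) : ‖F t‖ ≤ C * ρ.real Set.univ :=
    norm_integral_le_of_norm_le_const (ae_of_all _ fun x => hfC x t)
  have hf_x₂ (x₂ : E) : Measurable (f x₂) := hf.comp (measurable_const.prodMk measurable_id)
  have h_mean_int : Integrable (fun x => ∫ t, f x t ∂μ) ρ :=
    (integrable_uncurry_of_norm_le hf hfC).integral_prod_left
  have h_mean : ∫ x, ∫ t, f x t ∂μ ∂ρ = ∫ t, F t ∂μ :=
    integral_integral_swap (integrable_uncurry_of_norm_le hf hfC)
  have h_inner (x₂ : E) :
      ∫ x₁, ((∫ t, f x₁ t * f x₂ t ∂μ) - (∫ t, f x₁ t ∂μ) * ∫ t, f x₂ t ∂μ) ∂ρ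
        = ∫ t, F t * f x₂ t ∂μ - (∫ t, F t ∂μ) * ∫ t, f x₂ t ∂μ := by
    have h_int : Integrable (fun x₁ => ∫ t, f x₁ t * f x₂ t ∂μ) ρ :=
      (integrable_uncurry_mul_of_norm_le hf hfC (hf_x₂ x₂) (hfC x₂)).integral_prod_left
    rw [integral_sub h_int (h_mean_int.mul_const _), integral_mul_const, h_mean,
      integral_integral_mul_swap hf hfC (hf_x₂ x₂) (hfC x₂)]
  have h_outer_int : Integrable (fun x₂ => ∫ t, F t * f x₂ t ∂μ) ρ := by
    refine (integrable_uncurry_mul_of_norm_le (ρ := ρ) (μ := μ) hf hfC hF hFC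
      ).integral_prod_left.congr (ae_of_all _ fun x => ?_)
    simp only [uncurry_apply_pair, mul_comm]
  have h_outer : ∫ x₂, ∫ t, F t * f x₂ t ∂μ ∂ρ = ∫ t, F t ^ 2 ∂μ := by
    simp_rw [mul_comm (F _), integral_integral_mul_swap hf hfC hF hFC, sq]
    rfl
  simp_rw [h_inner]
  rw [integral_sub h_outer_int (h_mean_int.const_mul _), integral_const_mul, h_mean, h_outer, sq]

end Fubini

lemma Kernel.measurable_apply_Ici {E : Type*} [MeasurableSpace E] (κ : Kernel E ℝ)
    [IsSFiniteKernel κ] : Measurable fun p : E × ℝ => κ p.1 (Set.Ici p.2) :=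
  Kernel.measurable_kernel_prodMk_left (κ := κ.comap Prod.fst measurable_fst)
    (measurableSet_le measurable_fst.snd measurable_snd)

/-- With `ρ` the common law of the i.i.d. `X₁,X₂,X₃`, `κ x` the conditional law of `Y`
given `X = x`, `G x t = P(Y ≥ t | X = x)` and `h t = E[G_X(t)²]`:
`E[Cov[𝟙(Y₃ ≤ Y₁∧Ỹ₁), 𝟙(Y₃ ≤ Y₂∧Ỹ₂) | X₁,X₂,X₃]] = E[Var[h(Y₃)|X₃]]`,
where conditionally on the `X`'s the blocks are independent with `Y_i,Ỹ_i ~ κ X_i`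
i.i.d. (so the conditional covariance has the explicit integral form below). -/
theorem cov_indicator_eq_var_h
    {E : Type*} [MeasurableSpace E]
    (ρ : Measure E) [IsProbabilityMeasure ρ]
    (κ : Kernel E ℝ) [IsMarkovKernel κ]
    (G : E → ℝ → ℝ) (hG : ∀ x t, G x t = ((κ x) (Set.Ici t)).toReal)
    (h : ℝ → ℝ) (hh : ∀ t, h t = ∫ x, (G x t) ^ 2 ∂ρ) :
    (∫ x₃, ∫ x₂, ∫ x₁,
        ((∫ t, (G x₁ t) ^ 2 * (G x₂ t) ^ 2 ∂(κ x₃))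
          - (∫ t, (G x₁ t) ^ 2 ∂(κ x₃)) * (∫ t, (G x₂ t) ^ 2 ∂(κ x₃))) ∂ρ ∂ρ ∂ρ)
      = ∫ x, ((∫ t, (h t) ^ 2 ∂(κ x)) - (∫ t, h t ∂(κ x)) ^ 2) ∂ρ := by
  obtain rfl : G = fun x t => (κ x (Set.Ici t)).toReal := funext fun x => funext (hG x)
  obtain rfl : h = fun t => ∫ x, (κ x (Set.Ici t)).toReal ^ 2 ∂ρ := funext hh
  have hf : Measurable (uncurry fun x t => (κ x (Set.Ici t)).toReal ^ 2) :=
    (Kernel.measurable_apply_Ici κ).ennreal_toReal.pow_const 2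
  have hf_le (x : E) (t : ℝ) : ‖(κ x (Set.Ici t)).toReal ^ 2‖ ≤ 1 := by
    rw [norm_pow, Real.norm_of_nonneg ENNReal.toReal_nonneg]
    exact pow_le_one₀ ENNReal.toReal_nonneg measureReal_le_one
  exact integral_congr_ae (ae_of_all _ fun x₃ =>
    integral_integral_covariance_eq_variance_integral hf hf_le)
end

section
/- If X and Y are independent and F_{X,Y} is continuous, then E[ξ_n] = −1/(n−1), where ξ_n is Azadkia–Chatterjee's coefficient ξ_n = (6/(n²−1)) Σ_{i=1}^n min{R_i, R_{N(i)}} − (2n+1)/(n−1). -/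
/-!
Continuity of the joint CDF forces the law of `Y` to be atomless, so the `Yᵢ` are i.i.d. with no
ties, and by exchangeability each index of a set of `m` indices carries the minimum of its `Y`'s
with probability `1/m`. Since `min(Rᵢ, Rⱼ) = #{k : Yₖ ≤ min(Yᵢ, Yⱼ)}`, this gives
`E[min(Rᵢ, Rⱼ)] = 1/2 + 1/2 + (n-2)/3 = (n+1)/3` for `i ≠ j`. The nearest-neighbour index `N(i)`
is a function of the `X`-sample, hence independent of the `Y`'s, and never equals `i`, so also
`E[min(Rᵢ, R_{N(i)})] = (n+1)/3`, and `E[ξₙ] = 2n/(n-1) - (2n+1)/(n-1) = -1/(n-1)`.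
-/

open MeasureTheory ProbabilityTheory Filter Finset
open scoped ENNReal

section Atoms

variable {Ω : Type*} [MeasurableSpace Ω] {μ : Measure Ω}

lemma measure_eq_zero_of_continuousWithinAt_cdf [IsFiniteMeasure μ] {Y : Ω → ℝ}
    (hY : Measurable Y) {t : ℝ}
    (hcont : ContinuousWithinAt (fun s => μ.real {ω | Y ω ≤ s}) (Set.Iio t) t) :
    μ {ω | Y ω = t} = 0 := by
  have hjump : ∀ s < t, μ.real {ω | Y ω ≤ s} ≤ μ.real {ω | Y ω ≤ t} - μ.real {ω | Y ω = t} := by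
    intro s hs
    have hdisj : Disjoint {ω | Y ω ≤ s} {ω | Y ω = t} :=
      Set.disjoint_left.2 fun ω h1 h2 => (h1.trans_lt hs).ne h2
    have hsub : {ω | Y ω ≤ s} ∪ {ω | Y ω = t} ⊆ {ω | Y ω ≤ t} := by
      rintro ω (h | h)
      exacts [h.trans hs.le, h.le]
    rw [le_sub_iff_add_le, ← measureReal_union hdisj (hY (measurableSet_singleton t))]
    exact measureReal_mono hsub
  have hle := le_of_tendsto hcont (eventually_nhdsWithin_of_forall hjump)
  rw [← measureReal_eq_zero_iff]
  linarith [measureReal_nonneg (μ := μ) (s := {ω | Y ω = t})]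

lemma measure_eq_zero_of_continuous_jointCdf [IsFiniteMeasure μ] {κ : Type*} [Fintype κ]
    {X : Ω → EuclideanSpace ℝ κ} {Y : Ω → ℝ} (hY : Measurable Y)
    (hF : Continuous fun p : EuclideanSpace ℝ κ × ℝ =>
      (μ {ω | (∀ k, X ω k ≤ p.1 k) ∧ Y ω ≤ p.2}).toReal) (t : ℝ) :
    μ {ω | Y ω = t} = 0 := by
  let S : ℕ → Set Ω := fun m => {ω | ∀ k, X ω k ≤ m}
  have hcover : {ω | Y ω = t} ⊆ ⋃ m, {ω | Y ω = t} ∩ S m := by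
    intro ω hω
    obtain ⟨M, hM⟩ := Finite.exists_le fun k => X ω k
    obtain ⟨m, hm⟩ := exists_nat_ge M
    exact Set.mem_iUnion.2 ⟨m, hω, fun k => (hM k).trans hm⟩
  refine measure_mono_null hcover (measure_iUnion_null fun m => ?_)
  -- on `S m`, the CDF of `Y` is a section of the joint CDF at `x = (m, …, m)`
  rw [← Measure.restrict_apply (measurableSet_eq_fun hY measurable_const)]
  refine measure_eq_zero_of_continuousWithinAt_cdf hY (Continuous.continuousWithinAt ?_)
  convert hF.comp (Continuous.prodMk_right (WithLp.toLp 2 fun _ => (m : ℝ))) using 2 with s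
  rw [measureReal_def, Measure.restrict_apply (measurableSet_le hY measurable_const)]
  congr 2
  ext ω
  simp [S, and_comm]

end Atoms

lemma MeasureTheory.Measure.prod_diagonal_eq_zero {α : Type*} [MeasurableSpace α]
    [MeasurableEq α] (ρ ν : Measure α) [SFinite ν] [NullSingletonClass ν] :
    (ρ.prod ν) (Set.diagonal α) = 0 := by
  have hslice : ∀ x : α, Prod.mk x ⁻¹' Set.diagonal α = {x} := fun x => by
    ext; simp [eq_comm]
  simp [Measure.prod_apply measurableSet_diagonal, hslice]

section IID

variable {Ω ι : Type*} [MeasurableSpace Ω] {μ : Measure Ω} [IsProbabilityMeasure μ]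
  {ν : Measure ℝ} {Y : ι → Ω → ℝ}

lemma measure_eq_eq_zero_of_iIndepFun [NullSingletonClass ν] (hY : ∀ i, Measurable (Y i))
    (hind : iIndepFun Y μ) (hlaw : ∀ i, μ.map (Y i) = ν) {i j : ι} (hij : i ≠ j) :
    μ {ω | Y i ω = Y j ω} = 0 := by
  obtain rfl := hlaw j
  have := Measure.prod_diagonal_eq_zero (μ.map (Y i)) (μ.map (Y j))
  rwa [← (hind.indepFun hij).map_prod_eq_prod_map_map (hY i).aemeasurable (hY j).aemeasurable,
    Measure.map_apply ((hY i).prodMk (hY j)) measurableSet_diagonal] at this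

lemma map_comp_perm_eq_map_of_iIndepFun [Fintype ι] (hY : ∀ i, Measurable (Y i))
    (hind : iIndepFun Y μ) (hlaw : ∀ i, μ.map (Y i) = ν) (σ : Equiv.Perm ι) :
    μ.map (fun ω i => Y (σ i) ω) = μ.map (fun ω i => Y i ω) := by
  rw [(iIndepFun_iff_map_fun_eq_pi_map fun i => (hY _).aemeasurable).1 (hind.precomp σ.injective),
    (iIndepFun_iff_map_fun_eq_pi_map fun i => (hY i).aemeasurable).1 hind]
  simp only [hlaw]

lemma measure_forall_le_eq_inv_card [Fintype ι] [NullSingletonClass ν]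
    (hY : ∀ i, Measurable (Y i)) (hind : iIndepFun Y μ) (hlaw : ∀ i, μ.map (Y i) = ν)
    {s : Finset ι} {i : ι} (hi : i ∈ s) :
    μ {ω | ∀ j ∈ s, Y i ω ≤ Y j ω} = (#s : ℝ≥0∞)⁻¹ := by
  classical
  let A : ι → Set Ω := fun a => {ω | ∀ j ∈ s, Y a ω ≤ Y j ω}
  have hAmeas : ∀ a, MeasurableSet (A a) := fun a => by
    simp only [A, Set.ofPred_forall]
    exact s.measurableSet_biInter fun j _ => measurableSet_le (hY a) (hY j)
  have hexch : ∀ a ∈ s, μ (A a) = μ (A i) := by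
    intro a ha
    let σ := Equiv.swap i a
    have hσs : ∀ j ∈ s, σ j ∈ s := fun j hj => by
      simp only [σ, Equiv.swap_apply_def]
      split_ifs <;> assumption
    have hB : MeasurableSet {y : ι → ℝ | ∀ j ∈ s, y i ≤ y j} := by
      simp only [Set.ofPred_forall]
      exact s.measurableSet_biInter fun j _ => measurableSet_le (measurable_pi_apply i)
        (measurable_pi_apply j)
    have hAa : A a = (fun ω k => Y (σ k) ω) ⁻¹' {y | ∀ j ∈ s, y i ≤ y j} := by
      ext ω
      simp only [A, Set.mem_ofPred_eq, Set.mem_preimage, σ, Equiv.swap_apply_left]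
      refine ⟨fun h j hj => h _ (hσs j hj), fun h j hj => ?_⟩
      simpa [σ, Equiv.swap_apply_self] using h (σ j) (hσs j hj)
    rw [hAa, ← Measure.map_apply (measurable_pi_lambda _ fun k => hY (σ k)) hB,
      map_comp_perm_eq_map_of_iIndepFun hY hind hlaw, Measure.map_apply
        (measurable_pi_lambda _ hY) hB]
    rfl
  have hcover : ⋃ a ∈ s, A a = Set.univ := by
    refine Set.eq_univ_of_forall fun ω => ?_
    obtain ⟨a, ha, hmin⟩ := s.exists_min_image (fun j => Y j ω) ⟨i, hi⟩
    exact Set.mem_biUnion ha hmin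
  have hdisj : (s : Set ι).Pairwise (Function.onFun (AEDisjoint μ) A) := fun a _ b _ hab =>
    measure_mono_null (fun ω ⟨ha, hb⟩ => le_antisymm (ha b ‹_›) (hb a ‹_›))
      (measure_eq_eq_zero_of_iIndepFun hY hind hlaw hab)
  have hsum := measure_biUnion_finset₀ hdisj fun a _ => (hAmeas a).nullMeasurableSet
  rw [hcover, measure_univ, Finset.sum_congr rfl hexch, Finset.sum_const, nsmul_eq_mul] at hsum
  exact ENNReal.eq_inv_of_mul_eq_one_left (by rw [mul_comm]; exact hsum.symm)

end IID

section Integrals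

variable {Ω : Type*} [MeasurableSpace Ω] {μ : Measure Ω}

lemma integral_ite_one_zero {p : Ω → Prop} [DecidablePred p] (hp : MeasurableSet {ω | p ω}) :
    ∫ ω, (if p ω then (1 : ℝ) else 0) ∂μ = μ.real {ω | p ω} := by
  simpa [Set.indicator_apply] using integral_indicator_one (μ := μ) hp

lemma integrable_ite_one_zero [IsFiniteMeasure μ] {p : Ω → Prop} [DecidablePred p]
    (hp : MeasurableSet {ω | p ω}) : Integrable (fun ω => if p ω then (1 : ℝ) else 0) μ := by
  refine ((integrable_const (1 : ℝ)).indicator hp).congr (Eventually.of_forall fun ω => ?_)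
  simp [Set.indicator_apply]

lemma integrable_comp_of_measurable_index {ι E : Type*} [Fintype ι] [MeasurableSpace ι]
    [MeasurableSingletonClass ι] [NormedAddCommGroup E] {J : Ω → ι} {Z : ι → Ω → E}
    (hJ : Measurable J) (hint : ∀ j, Integrable (Z j) μ) : Integrable (fun ω => Z (J ω) ω) μ := by
  classical
  refine (integrable_finsetSum univ fun j _ => (hint j).indicator
    (hJ (measurableSet_singleton j))).congr (Eventually.of_forall fun ω => ?_)
  simp [Set.indicator_apply]

lemma integral_comp_of_indepFun_index [IsProbabilityMeasure μ] {ι : Type*} [Fintype ι]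
    [MeasurableSpace ι] [MeasurableSingletonClass ι] {J : Ω → ι}
    {Z : ι → Ω → ℝ} (hJ : Measurable J) (hind : IndepFun J (fun ω j => Z j ω) μ)
    (hint : ∀ j, Integrable (Z j) μ) {s : Set ι} (hJs : ∀ ω, J ω ∈ s) {c : ℝ}
    (hc : ∀ j ∈ s, ∫ ω, Z j ω ∂μ = c) :
    ∫ ω, Z (J ω) ω ∂μ = c := by
  classical
  let E : ι → Ω → ℝ := fun j ω => if J ω = j then 1 else 0
  have hE : ∀ j, Measurable (E j) := fun j => Measurable.ite (hJ (measurableSet_singleton j))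
    measurable_const measurable_const
  have hindj : ∀ j, IndepFun (E j) (Z j) μ := fun j =>
    hind.comp (measurable_of_countable fun i => if i = j then (1 : ℝ) else 0)
      (measurable_pi_apply j)
  have hintj : ∀ j, Integrable (fun ω => E j ω * Z j ω) μ := fun j =>
    (hindj j).integrable_mul (integrable_ite_one_zero (hJ (measurableSet_singleton j))) (hint j)
  have hterm : ∀ j, ∫ ω, E j ω * Z j ω ∂μ = μ.real (J ⁻¹' {j}) * c := by
    intro j
    rw [← Pi.mul_def, (hindj j).integral_mul_eq_mul_integral (hE j).aestronglyMeasurable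
      (hint j).aestronglyMeasurable,
      show ∫ ω, E j ω ∂μ = μ.real (J ⁻¹' {j}) from
        integral_ite_one_zero (hJ (measurableSet_singleton j))]
    by_cases hj : j ∈ s
    · rw [hc j hj]
    · have hempty : J ⁻¹' {j} = ∅ := Set.eq_empty_of_forall_notMem fun ω hω => hj (hω ▸ hJs ω)
      simp [hempty]
  calc ∫ ω, Z (J ω) ω ∂μ = ∫ ω, ∑ j, E j ω * Z j ω ∂μ := by simp [E]
    _ = ∑ j, μ.real (J ⁻¹' {j}) * c := by
      rw [integral_finsetSum _ fun j _ => hintj j]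
      exact Finset.sum_congr rfl fun j _ => hterm j
    _ = c := by
      rw [← Finset.sum_mul, sum_measureReal_preimage_singleton _ fun j _ =>
        hJ (measurableSet_singleton j)]
      simp

end Integrals

section Rank

variable {ι : Type*} [Fintype ι]

noncomputable def sampleRank (y : ι → ℝ) (i : ι) : ℝ := ∑ k, if y k ≤ y i then 1 else 0

lemma min_sampleRank_eq_sum (y : ι → ℝ) (i j : ι) :
    min (sampleRank y i) (sampleRank y j) = ∑ k, if y k ≤ min (y i) (y j) then (1 : ℝ) else 0 := by
  have hmono : Monotone fun t : ℝ => ∑ k, if y k ≤ t then (1 : ℝ) else 0 := fun s t hst =>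
    sum_le_sum fun k _ => by
      split_ifs with hs ht
      exacts [le_rfl, absurd (hs.trans hst) ht, zero_le_one, le_rfl]
  exact hmono.map_min.symm

lemma measurable_sampleRank (i : ι) : Measurable fun y : ι → ℝ => sampleRank y i :=
  Finset.measurable_sum _ fun k _ => Measurable.ite
    (measurableSet_le (measurable_pi_apply k) (measurable_pi_apply i)) measurable_const
    measurable_const

lemma sum_inv_card_insert_pair [DecidableEq ι] {i j : ι} (hij : i ≠ j) :
    ∑ k, ((#{k, i, j} : ℕ) : ℝ)⁻¹ = (Fintype.card ι + 1) / 3 := by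
  have hrest : ∀ k ∈ ({i, j} : Finset ι)ᶜ, ((#{k, i, j} : ℕ) : ℝ)⁻¹ = 3⁻¹ := by
    intro k hk
    simp only [mem_compl, mem_insert, mem_singleton, not_or] at hk
    rw [card_insert_of_notMem (by simp [hk.1, hk.2]), card_pair hij]
    norm_num
  have hcard : #({i, j} : Finset ι)ᶜ + 2 = Fintype.card ι := by
    rw [card_compl, card_pair hij, Nat.sub_add_cancel]
    exact card_pair hij ▸ card_le_univ _
  rw [← sum_add_sum_compl {i, j}, sum_pair hij, sum_congr rfl hrest, sum_const, nsmul_eq_mul,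
    ← hcard]
  simp [hij, hij.symm]
  ring

end Rank

section RankIID

variable {Ω ι : Type*} [MeasurableSpace Ω] {μ : Measure Ω} [IsProbabilityMeasure μ]
  {Y : ι → Ω → ℝ} [Fintype ι] {ν : Measure ℝ} [NullSingletonClass ν]

lemma integrable_min_sampleRank (hY : ∀ i, Measurable (Y i)) (i j : ι) :
    Integrable (fun ω => min (sampleRank (fun k => Y k ω) i) (sampleRank (fun k => Y k ω) j))
      μ := by
  simp only [min_sampleRank_eq_sum]
  exact integrable_finsetSum _ fun k _ => integrable_ite_one_zero
    (measurableSet_le (hY k) ((hY i).min (hY j)))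

lemma integral_min_sampleRank (hY : ∀ i, Measurable (Y i)) (hind : iIndepFun Y μ)
    (hlaw : ∀ i, μ.map (Y i) = ν) {i j : ι} (hij : i ≠ j) :
    ∫ ω, min (sampleRank (fun k => Y k ω) i) (sampleRank (fun k => Y k ω) j) ∂μ
      = (Fintype.card ι + 1) / 3 := by
  classical
  have hk : ∀ k, ∫ ω, (if Y k ω ≤ min (Y i ω) (Y j ω) then (1 : ℝ) else 0) ∂μ
      = ((#{k, i, j} : ℕ) : ℝ)⁻¹ := by
    intro k
    have hset : {ω | Y k ω ≤ min (Y i ω) (Y j ω)}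
        = {ω | ∀ l ∈ ({k, i, j} : Finset ι), Y k ω ≤ Y l ω} := by
      ext ω; simp
    rw [integral_ite_one_zero (measurableSet_le (hY k) ((hY i).min (hY j))), measureReal_def,
      hset, measure_forall_le_eq_inv_card hY hind hlaw (mem_insert_self k _), ENNReal.toReal_inv,
      ENNReal.toReal_natCast]
  simp only [min_sampleRank_eq_sum]
  rw [integral_finsetSum _ fun k _ => integrable_ite_one_zero
    (measurableSet_le (hY k) ((hY i).min (hY j)))]
  simp only [hk, sum_inv_card_insert_pair hij]

lemma integral_min_sampleRank_indep_index [MeasurableSpace ι] [MeasurableSingletonClass ι]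
    (hY : ∀ i, Measurable (Y i)) (hind : iIndepFun Y μ) (hlaw : ∀ i, μ.map (Y i) = ν)
    {J : Ω → ι} (hJ : Measurable J) (hJY : IndepFun J (fun ω k => Y k ω) μ) {i : ι}
    (hJi : ∀ ω, J ω ≠ i) :
    ∫ ω, min (sampleRank (fun k => Y k ω) i) (sampleRank (fun k => Y k ω) (J ω)) ∂μ
      = (Fintype.card ι + 1) / 3 :=
  integral_comp_of_indepFun_index (s := {j | j ≠ i})
    (Z := fun j ω => min (sampleRank (fun k => Y k ω) i) (sampleRank (fun k => Y k ω) j)) hJ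
    (hJY.comp measurable_id (measurable_pi_lambda _ fun j =>
      (measurable_sampleRank i).min (measurable_sampleRank j)))
    (integrable_min_sampleRank hY i) hJi
    fun _ hj => integral_min_sampleRank hY hind hlaw (Ne.symm hj)

end RankIID

/-- If `X ⊥ Y` and the joint CDF of `(X,Y)` is continuous, then
`E[ξₙ] = -1/(n-1)` for Azadkia–Chatterjee's coefficient
`ξₙ = 6/(n²-1) ∑ᵢ min(Rᵢ, R_{N(i)}) - (2n+1)/(n-1)`, where `Rᵢ` is the rank of `Yᵢ`
and `N(i)` is the nearest-neighbor index of `Xᵢ`, a measurable function of the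
`X`-sample breaking ties. -/
theorem expectation_xi_n_null
    {Ω : Type*} [MeasurableSpace Ω] (μ : Measure Ω) [IsProbabilityMeasure μ]
    (d n : ℕ) (hn : 2 ≤ n)
    (X : Fin n → Ω → EuclideanSpace ℝ (Fin d))
    (Y : Fin n → Ω → ℝ)
    (hX : ∀ i, Measurable (X i)) (hY : ∀ i, Measurable (Y i))
    -- the pairs (Xᵢ, Yᵢ) are i.i.d.
    (hiid : iIndepFun (fun i ω => (X i ω, Y i ω)) μ)
    (hident : ∀ i j, μ.map (fun ω => (X i ω, Y i ω)) = μ.map (fun ω => (X j ω, Y j ω)))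
    -- X is independent of Y
    (hXY : IndepFun (fun ω i => X i ω) (fun ω i => Y i ω) μ)
    -- the joint CDF of (X, Y) is continuous
    (hFcont : Continuous fun p : EuclideanSpace ℝ (Fin d) × ℝ =>
      (μ {ω | (∀ k, X ⟨0, by omega⟩ ω k ≤ p.1 k) ∧ Y ⟨0, by omega⟩ ω ≤ p.2}).toReal)
    -- nearest-neighbor index, a measurable function of the X-sample
    (φ : (Fin n → EuclideanSpace ℝ (Fin d)) → Fin n → Fin n) (hφ : Measurable φ)
    (N : Ω → Fin n → Fin n) (hN : ∀ ω, N ω = φ (fun i => X i ω))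
    (hNspec : ∀ ω i, N ω i ≠ i ∧
      ∀ j, j ≠ i → dist (X (N ω i) ω) (X i ω) ≤ dist (X j ω) (X i ω))
    -- ranks
    (R : Fin n → Ω → ℝ)
    (hR : ∀ i ω, R i ω = ∑ j, if Y j ω ≤ Y i ω then (1 : ℝ) else 0)
    -- the Azadkia–Chatterjee coefficient
    (ξ : Ω → ℝ)
    (hξ : ∀ ω, ξ ω = 6 / ((n : ℝ) ^ 2 - 1) * ∑ i, min (R i ω) (R (N ω i) ω)
      - (2 * (n : ℝ) + 1) / ((n : ℝ) - 1)) :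
    ∫ ω, ξ ω ∂μ = -1 / ((n : ℝ) - 1) := by
  obtain rfl : ξ = _ := funext hξ
  obtain rfl : R = fun i ω => sampleRank (fun k => Y k ω) i := funext fun i => funext (hR i)
  obtain rfl : N = fun ω => φ fun k => X k ω := funext hN
  set ν := μ.map (Y ⟨0, by omega⟩)
  have : NullSingletonClass ν := ⟨fun t => by
    rw [Measure.map_apply (hY _) (measurableSet_singleton t)]
    exact measure_eq_zero_of_continuous_jointCdf (hY _) hFcont t⟩
  have hind : iIndepFun Y μ := hiid.comp (fun _ => Prod.snd) fun _ => measurable_snd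
  have hlaw : ∀ i, μ.map (Y i) = ν := fun i => by
    simpa [Measure.map_map measurable_snd ((hX _).prodMk (hY _)), Function.comp_def, ν] using
      congrArg (Measure.map Prod.snd) (hident i ⟨0, by omega⟩)
  have hJ : ∀ i, Measurable fun ω => φ (fun k => X k ω) i := fun i =>
    (measurable_pi_apply i).comp (hφ.comp (measurable_pi_lambda _ hX))
  have hmin : ∀ i, ∫ ω, min (sampleRank (fun k => Y k ω) i)
      (sampleRank (fun k => Y k ω) (φ (fun k => X k ω) i)) ∂μ = (n + 1) / 3 := fun i => by
    simpa using integral_min_sampleRank_indep_index hY hind hlaw (hJ i)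
      (hXY.comp (measurable_pi_apply i |>.comp hφ) measurable_id) fun ω => (hNspec ω i).1
  have hint : ∀ i, Integrable (fun ω => min (sampleRank (fun k => Y k ω) i)
      (sampleRank (fun k => Y k ω) (φ (fun k => X k ω) i))) μ := fun i =>
    integrable_comp_of_measurable_index (Z := fun j ω => min (sampleRank (fun k => Y k ω) i)
      (sampleRank (fun k => Y k ω) j)) (hJ i) (integrable_min_sampleRank hY i)
  have hn1 : (n : ℝ) - 1 ≠ 0 := sub_ne_zero.2 (by norm_cast; omega)
  rw [integral_sub ((integrable_finsetSum _ fun i _ => hint i).const_mul _) (integrable_const _),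
    integral_const_mul, integral_finsetSum _ fun i _ => hint i]
  simp only [hmin, sum_const, card_univ, Fintype.card_fin, nsmul_eq_mul, integral_const,
    probReal_univ, one_smul, show (n : ℝ) ^ 2 - 1 = (n - 1) * (n + 1) by ring]
  field_simp
  ring
end
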